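/- Let (X,φ) and (Y,ψ) be Smale spaces that are asymptotically continuous orbit equivalent via a homeomorphism h : X → Y with cocycle data (c₁, c₂, d₁, d₂). Let x ∈ X be an asymptotic p-periodic point (p ∈ ℤ, p ≠ 0) and suppose c_h^p(x) := c₁^p(x) + d₁(φ^p(x),x) ≠ 0, so that h(x) and h(φ(x)) are asymptotic periodic points of (Y,ψ) and the limits η^s(h(x)) = lim_{k→∞} ψ^{|c_h^p(x)|k}(h(x)), η^u(h(x)) = lim_{k→∞} ψ^{−|c_h^p(x)|k}(h(x)) exist (and similarly for h(φ(x))). Then: (i) η^s(h(φ(x))) = ψ^{c₁(x)}(η^s(h(x))) and η^u(h(φ(x))) = ψ^{c₁(x)}(η^u(h(x))); (ii) if x is a p-periodic point (φ^p(x) = x), then ψ^{c₁^p(x)}(η^s(h(x))) = η^s(h(x)) and ψ^{c₁^p(x)}(η^u(h(x))) = η^u(h(x)); (iii) if moreover x, h(x) and h(φ(x)) are all periodic points, then η^s(h(x)) = η^u(h(x)) = h(x), η^s(h(φ(x))) = η^u(h(φ(x))) = h(φ(x)), and h(φ(x)) = ψ^{c₁(x)}(h(x)). -/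

import Mathlib

/-!
Pairs in `G_ψ^a` are asymptotic in both time directions, since `ψ` contracts local stable sets
and `ψ⁻¹` contracts local unstable sets. The orbit-equivalence condition `xi₁_mem` with `n = 1`
makes `h(φ x)` asymptotic to `ψ^{c₁(x)}(h x)`, so along `ψ^{±|c|k}` the two orbits have limits
related by `ψ^{c₁(x)}`. A limit of `ψ^{nk}(y)` is fixed by `ψ^n`, hence by `ψ^m` for every
multiple `m` of `n`; for `φ^p x = x` the cocycle `d₁` vanishes on the diagonal, so
`c_h^p(x) = c₁^p(x)`. When `h x` is periodic, the sequence `ψ^{nk}(h x)` is constant along a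
subsequence, so its limit is `h x`.
-/

open Filter Set Topology

noncomputable section

/-- Integer iterate of a homeomorphism. -/
def hIter {X : Type*} [TopologicalSpace X] (φ : X ≃ₜ X) (n : ℤ) (x : X) : X :=
  ((φ.toEquiv : Equiv.Perm X) ^ n) x

/-- The cocycle sums `f^n` of a function `f : X → ℤ` along the iterates of `φ`:
`f^n(x) = Σ_{i=0}^{n-1} f(φ^i(x))` for `n > 0`, `f^0 = 0`, and
`f^n(x) = −Σ_{i=n}^{-1} f(φ^i(x))` for `n < 0`. -/
def cSum {X : Type*} [TopologicalSpace X] (φ : X ≃ₜ X) (f : X → ℤ) (n : ℤ) (x : X) : ℤ :=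
  if 0 ≤ n then ∑ i ∈ Finset.range n.toNat, f (hIter φ i x)
  else -∑ i ∈ Finset.range (-n).toNat, f (hIter φ (n + i) x)

/-- Stable asymptotic pairs (limit definition). -/
def asympS {X : Type*} [MetricSpace X] (φ : X ≃ₜ X) : Set (X × X) :=
  {p | Tendsto (fun n : ℕ => dist (hIter φ n p.1) (hIter φ n p.2)) atTop (nhds 0)}

/-- Unstable asymptotic pairs (limit definition). -/
def asympU {X : Type*} [MetricSpace X] (φ : X ≃ₜ X) : Set (X × X) :=
  {p | Tendsto (fun n : ℕ => dist (hIter φ (-(n : ℤ)) p.1) (hIter φ (-(n : ℤ)) p.2))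
    atTop (nhds 0)}

/-- Asymptotic pairs (limit definition). -/
def asympA {X : Type*} [MetricSpace X] (φ : X ≃ₜ X) : Set (X × X) := asympS φ ∩ asympU φ

/-- The `ω`-limit set of `x`. -/
def omegaSet {X : Type*} [MetricSpace X] (φ : X ≃ₜ X) (x : X) : Set X :=
  {z | ∃ n : ℕ → ℕ, StrictMono n ∧ Tendsto (fun i => hIter φ (n i) x) atTop (nhds z)}

/-- The `α`-limit set of `x`. -/
def alphaSet {X : Type*} [MetricSpace X] (φ : X ≃ₜ X) (x : X) : Set X :=
  {z | ∃ n : ℕ → ℤ, StrictAnti n ∧ Tendsto (fun i => hIter φ (n i) x) atTop (nhds z)}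

/-- A Smale space structure on a compact metric space `X`. -/
structure SmaleSpace (X : Type*) [MetricSpace X] [CompactSpace X] where
  phi : X ≃ₜ X
  eps : ℝ
  lam : ℝ
  br : X → X → X
  eps_pos : 0 < eps
  lam_pos : 0 < lam
  lam_lt_one : lam < 1
  br_cont : ContinuousOn (fun p : X × X => br p.1 p.2) {p : X × X | dist p.1 p.2 < eps}
  br_self : ∀ x : X, br x x = x
  br_assoc_left : ∀ x y z : X, dist x y < eps → dist (br x y) z < eps → dist x z < eps →
    br (br x y) z = br x z
  br_assoc_right : ∀ x y z : X, dist y z < eps → dist x (br y z) < eps → dist x z < eps →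
    br x (br y z) = br x z
  phi_br : ∀ x y : X, dist x y < eps → dist (phi x) (phi y) < eps →
    phi (br x y) = br (phi x) (phi y)
  contract_s : ∀ x y z : X, br y x = y → dist x y < eps → br z x = z → dist x z < eps →
    dist (phi y) (phi z) ≤ lam * dist y z
  contract_u : ∀ x y z : X, br x y = y → dist x y < eps → br x z = z → dist x z < eps →
    dist (phi.symm y) (phi.symm z) ≤ lam * dist y z

namespace SmaleSpace

variable {X Y : Type*} [MetricSpace X] [CompactSpace X] [MetricSpace Y] [CompactSpace Y]

/-- Local stable set `X^s(x,ε)`. -/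
def Xs (S : SmaleSpace X) (x : X) (ε : ℝ) : Set X := {y | S.br y x = y ∧ dist x y < ε}

/-- Local unstable set `X^u(x,ε)`. -/
def Xu (S : SmaleSpace X) (x : X) (ε : ℝ) : Set X := {y | S.br x y = y ∧ dist x y < ε}

def Gs0 (S : SmaleSpace X) : Set (X × X) := {p | p.2 ∈ S.Xs p.1 S.eps}

def Gu0 (S : SmaleSpace X) : Set (X × X) := {p | p.2 ∈ S.Xu p.1 S.eps}

/-- `G_φ^{s,n} = (φ×φ)^{-n}(G_φ^{s,0})`. -/
def GsN (S : SmaleSpace X) (n : ℤ) : Set (X × X) :=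
  {p | (hIter S.phi n p.1, hIter S.phi n p.2) ∈ S.Gs0}

/-- `G_φ^{u,n} = (φ×φ)^{n}(G_φ^{u,0})`. -/
def GuN (S : SmaleSpace X) (n : ℤ) : Set (X × X) :=
  {p | (hIter S.phi (-n) p.1, hIter S.phi (-n) p.2) ∈ S.Gu0}

def GaN (S : SmaleSpace X) (n : ℤ) : Set (X × X) := S.GsN n ∩ S.GuN n

/-- The asymptotic equivalence relation `G_φ^a = ⋃_{n ≥ 0} G_φ^{a,n}`. -/
def Ga (S : SmaleSpace X) : Set (X × X) := ⋃ n : ℕ, S.GaN n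

lemma gaN_subset_ga (S : SmaleSpace X) (n : ℕ) : S.GaN n ⊆ S.Ga :=
  Set.subset_iUnion (fun k : ℕ => S.GaN k) n

/-- The inductive limit topology on `G_φ^a`: a set is open iff its intersection with each
`G_φ^{a,n}` is open in the subspace topology from `X × X`. -/
def gaTopology (S : SmaleSpace X) : TopologicalSpace ↥S.Ga :=
  ⨆ n : ℕ, TopologicalSpace.coinduced (Set.inclusion (S.gaN_subset_ga n)) inferInstance

/-- Irreducibility of a Smale space. -/
def Irreducible (S : SmaleSpace X) : Prop :=
  ∀ U V : Set X, IsOpen U → U.Nonempty → IsOpen V → V.Nonempty →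
    ∃ K : ℕ, ((hIter S.phi K '' U) ∩ V).Nonempty

def IsPeriodicPoint (S : SmaleSpace X) (x : X) : Prop :=
  ∃ p : ℕ, 0 < p ∧ hIter S.phi p x = x

/-- `h` is a flip conjugacy between `(X,φ)` and `(Y,ψ)`. -/
def IsFlipConjugacy (S : SmaleSpace X) (T : SmaleSpace Y) (h : X ≃ₜ Y) : Prop :=
  (∀ x, h (S.phi x) = T.phi (h x)) ∨ (∀ x, h (S.phi x) = T.phi.symm (h x))

def FlipConjugate (S : SmaleSpace X) (T : SmaleSpace Y) : Prop :=
  ∃ h : X ≃ₜ Y, IsFlipConjugacy S T h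

/-- An isomorphism of the principal étale groupoids `G_φ^a` and `G_ψ^a`:
a bijection which is a homeomorphism for the inductive limit topologies and preserves
the (equivalence relation) groupoid structure. -/
structure GaIso (S : SmaleSpace X) (T : SmaleSpace Y) where
  toEquiv : ↥S.Ga ≃ ↥T.Ga
  cont : @Continuous _ _ S.gaTopology T.gaTopology toEquiv
  cont_symm : @Continuous _ _ T.gaTopology S.gaTopology toEquiv.symm
  map_mul : ∀ p q r : ↥S.Ga, (p : X × X).2 = (q : X × X).1 →
    (r : X × X) = ((p : X × X).1, (q : X × X).2) →
    (toEquiv p : Y × Y).2 = (toEquiv q : Y × Y).1 ∧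
      (toEquiv r : Y × Y) = ((toEquiv p : Y × Y).1, (toEquiv q : Y × Y).2)

end SmaleSpace

namespace SmaleSpace

variable {X Y : Type*} [MetricSpace X] [CompactSpace X] [MetricSpace Y] [CompactSpace Y]

/-- The data of an asymptotic continuous orbit equivalence between two Smale spaces
`(X,φ)` and `(Y,ψ)`: a homeomorphism `h : X → Y`, continuous functions `c₁ : X → ℤ`,
`c₂ : Y → ℤ` and continuous two-cocycle functions `d₁ : G_φ^a → ℤ`, `d₂ : G_ψ^a → ℤ`
satisfying conditions (1), (2) and (i)–(viii) of the definition of asymptotic continuous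
orbit equivalence. -/
structure ACOEData (S : SmaleSpace X) (T : SmaleSpace Y) where
  h : X ≃ₜ Y
  c₁ : X → ℤ
  c₂ : Y → ℤ
  d₁ : X → X → ℤ
  d₂ : Y → Y → ℤ
  c₁_cont : Continuous c₁
  c₂_cont : Continuous c₂
  d₁_cocycle : ∀ x z w : X, (x, z) ∈ S.Ga → (z, w) ∈ S.Ga → d₁ x z + d₁ z w = d₁ x w
  d₂_cocycle : ∀ y w v : Y, (y, w) ∈ T.Ga → (w, v) ∈ T.Ga → d₂ y w + d₂ w v = d₂ y v
  d₁_cont : @Continuous ↥S.Ga ℤ S.gaTopology _ fun p => d₁ (p : X × X).1 (p : X × X).2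
  d₂_cont : @Continuous ↥T.Ga ℤ T.gaTopology _ fun p => d₂ (p : Y × Y).1 (p : Y × Y).2
  cocycle_eq₁ : ∀ (m : ℤ) (x z : X), (x, z) ∈ S.Ga →
    cSum S.phi c₁ m x + d₁ (hIter S.phi m x) (hIter S.phi m z)
      = cSum S.phi c₁ m z + d₁ x z
  cocycle_eq₂ : ∀ (m : ℤ) (y w : Y), (y, w) ∈ T.Ga →
    cSum T.phi c₂ m y + d₂ (hIter T.phi m y) (hIter T.phi m w)
      = cSum T.phi c₂ m w + d₂ y w
  xi₁_mem : ∀ (n : ℤ) (x : X),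
    (hIter T.phi (cSum S.phi c₁ n x) (h x), h (hIter S.phi n x)) ∈ T.Ga
  xi₁_cont : ∀ n : ℤ, @Continuous X ↥T.Ga _ T.gaTopology
    fun x => ⟨(hIter T.phi (cSum S.phi c₁ n x) (h x), h (hIter S.phi n x)), xi₁_mem n x⟩
  xi₂_mem : ∀ (n : ℤ) (y : Y),
    (hIter S.phi (cSum T.phi c₂ n y) (h.symm y), h.symm (hIter T.phi n y)) ∈ S.Ga
  xi₂_cont : ∀ n : ℤ, @Continuous Y ↥S.Ga _ S.gaTopology
    fun y => ⟨(hIter S.phi (cSum T.phi c₂ n y) (h.symm y), h.symm (hIter T.phi n y)),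
      xi₂_mem n y⟩
  eta₁_mem : ∀ x z : X, (x, z) ∈ S.Ga → (hIter T.phi (d₁ x z) (h x), h z) ∈ T.Ga
  eta₁_cont : @Continuous ↥S.Ga ↥T.Ga S.gaTopology T.gaTopology
    fun p => ⟨(hIter T.phi (d₁ (p : X × X).1 (p : X × X).2) (h (p : X × X).1),
      h (p : X × X).2), eta₁_mem (p : X × X).1 (p : X × X).2 p.2⟩
  eta₂_mem : ∀ y w : Y, (y, w) ∈ T.Ga → (hIter S.phi (d₂ y w) (h.symm y), h.symm w) ∈ S.Ga
  eta₂_cont : @Continuous ↥T.Ga ↥S.Ga T.gaTopology S.gaTopology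
    fun p => ⟨(hIter S.phi (d₂ (p : Y × Y).1 (p : Y × Y).2) (h.symm (p : Y × Y).1),
      h.symm (p : Y × Y).2), eta₂_mem (p : Y × Y).1 (p : Y × Y).2 p.2⟩
  cond_v : ∀ (n : ℤ) (x : X),
    cSum T.phi c₂ (cSum S.phi c₁ n x) (h x)
      + d₂ (hIter T.phi (cSum S.phi c₁ n x) (h x)) (h (hIter S.phi n x)) = n
  cond_vi : ∀ (n : ℤ) (y : Y),
    cSum S.phi c₁ (cSum T.phi c₂ n y) (h.symm y)
      + d₁ (hIter S.phi (cSum T.phi c₂ n y) (h.symm y)) (h.symm (hIter T.phi n y)) = n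
  cond_vii : ∀ x z : X, (x, z) ∈ S.Ga →
    cSum T.phi c₂ (d₁ x z) (h x) + d₂ (hIter T.phi (d₁ x z) (h x)) (h z) = 0
  cond_viii : ∀ y w : Y, (y, w) ∈ T.Ga →
    cSum S.phi c₁ (d₂ y w) (h.symm y) + d₁ (hIter S.phi (d₂ y w) (h.symm y)) (h.symm w) = 0

/-- Asymptotic continuous orbit equivalence of Smale spaces. -/
def ACOE (S : SmaleSpace X) (T : SmaleSpace Y) : Prop := Nonempty (ACOEData S T)

/-- Asymptotic flip conjugacy: asymptotic continuous orbit equivalence in which the cocycle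
data can be chosen as `c₁ ≡ 1, c₂ ≡ 1, d₁ ≡ 0, d₂ ≡ 0` or as
`c₁ ≡ −1, c₂ ≡ −1, d₁ ≡ 0, d₂ ≡ 0`. -/
def AsymptoticallyFlipConjugate (S : SmaleSpace X) (T : SmaleSpace Y) : Prop :=
  ∃ A : ACOEData S T,
    (A.c₁ = (fun _ => 1) ∧ A.c₂ = (fun _ => 1) ∧
      A.d₁ = (fun _ _ => 0) ∧ A.d₂ = (fun _ _ => 0)) ∨
    (A.c₁ = (fun _ => -1) ∧ A.c₂ = (fun _ => -1) ∧
      A.d₁ = (fun _ _ => 0) ∧ A.d₂ = (fun _ _ => 0))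

end SmaleSpace


section Iterates

variable {Z : Type*} [TopologicalSpace Z] (φ : Z ≃ₜ Z)

lemma hIter_eq_coe_zpow (n : ℤ) : hIter φ n = ⇑(φ ^ n) := by
  let toPerm : (Z ≃ₜ Z) →* Equiv.Perm Z :=
    { toFun := Homeomorph.toEquiv, map_one' := rfl, map_mul' := fun _ _ => rfl }
  funext x
  exact congrArg (· x) (map_zpow toPerm φ n).symm

lemma continuous_hIter (n : ℤ) : Continuous (hIter φ n) := by
  rw [hIter_eq_coe_zpow]
  exact (φ ^ n).continuous

lemma hIter_add (m n : ℤ) (z : Z) : hIter φ (m + n) z = hIter φ m (hIter φ n z) := by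
  simp [hIter, zpow_add, Equiv.Perm.mul_apply]

lemma hIter_one (z : Z) : hIter φ 1 z = φ z := by simp [hIter]

lemma hIter_mul_natCast (n : ℤ) (k : ℕ) : hIter φ (n * k) = (hIter φ n)^[k] := by
  funext z
  simp only [hIter, zpow_mul, zpow_natCast, Equiv.Perm.coe_pow]
  rfl

lemma hIter_natCast (k : ℕ) : hIter φ k = (⇑φ)^[k] := by
  rw [← one_mul (k : ℤ), hIter_mul_natCast, funext (hIter_one φ)]

lemma hIter_neg_natCast (k : ℕ) : hIter φ (-k) = (⇑φ.symm)^[k] := by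
  rw [neg_eq_neg_one_mul, hIter_mul_natCast]
  rfl

lemma hIter_eq_self_of_dvd {n m : ℤ} {z : Z} (hz : hIter φ n z = z) (hnm : n ∣ m) :
    hIter φ m z = z := by
  obtain ⟨k, rfl⟩ := hnm
  simp only [hIter, zpow_mul] at hz ⊢
  exact Equiv.Perm.zpow_apply_eq_self_of_apply_eq_self hz k

lemma cSum_one (f : Z → ℤ) (z : Z) : cSum φ f 1 z = f z := by
  simp [cSum, hIter]

end Iterates

section Limits

variable {Z : Type*} [TopologicalSpace Z] [T2Space Z] {φ : Z ≃ₜ Z} {n : ℤ} {z L : Z}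

lemma hIter_eq_self_of_tendsto (hz : Tendsto (fun k : ℕ => hIter φ (n * k) z) atTop (𝓝 L)) :
    hIter φ n L = L := by
  simp only [hIter_mul_natCast] at hz
  exact isFixedPt_of_tendsto_iterate hz (continuous_hIter φ n).continuousAt

lemma eq_of_tendsto_hIter_of_periodic {q : ℕ} (hq : 0 < q) (hzq : hIter φ q z = z)
    (hz : Tendsto (fun k : ℕ => hIter φ (n * k) z) atTop (𝓝 L)) : L = z := by
  have hconst : ∀ k : ℕ, hIter φ (n * ↑(q * k)) z = z := fun k =>
    hIter_eq_self_of_dvd φ hzq ⟨n * k, by push_cast; ring⟩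
  refine tendsto_nhds_unique (hz.comp (tendsto_id.const_mul_atTop' hq)) ?_
  simpa only [Function.comp_def, id, hconst] using tendsto_const_nhds

end Limits

section Asymptotic

variable {Z : Type*} [MetricSpace Z] {φ : Z ≃ₜ Z} {n : ℤ} {y w L M : Z}

lemma tendsto_dist_hIter_cofinite (h : (y, w) ∈ asympA φ) :
    Tendsto (fun m : ℤ => dist (hIter φ m y) (hIter φ m w)) cofinite (𝓝 0) := by
  rw [Int.cofinite_eq, tendsto_sup, ← map_neg_atTop, ← Nat.map_cast_int_atTop, map_map,
    tendsto_map'_iff, tendsto_map'_iff]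
  exact ⟨h.2, h.1⟩

lemma eq_of_tendsto_hIter_of_mem_asympA (hn : n ≠ 0) (h : (y, w) ∈ asympA φ)
    (hy : Tendsto (fun k : ℕ => hIter φ (n * k) y) atTop (𝓝 L))
    (hw : Tendsto (fun k : ℕ => hIter φ (n * k) w) atTop (𝓝 M)) : L = M := by
  have hmul : Tendsto (fun k : ℕ => n * (k : ℤ)) atTop cofinite := by
    rw [← Nat.cofinite_eq_atTop]
    exact ((mul_right_injective₀ hn).comp Nat.cast_injective).tendsto_cofinite
  exact dist_eq_zero.mp
    (tendsto_nhds_unique (hy.dist hw) ((tendsto_dist_hIter_cofinite h).comp hmul))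

lemma eq_hIter_of_tendsto_of_mem_asympA {c : ℤ} (hn : n ≠ 0)
    (h : (hIter φ c y, w) ∈ asympA φ)
    (hy : Tendsto (fun k : ℕ => hIter φ (n * k) y) atTop (𝓝 L))
    (hw : Tendsto (fun k : ℕ => hIter φ (n * k) w) atTop (𝓝 M)) : M = hIter φ c L := by
  refine (eq_of_tendsto_hIter_of_mem_asympA hn h ?_ hw).symm
  have hcomm : ∀ k : ℕ, hIter φ (n * k) (hIter φ c y) = hIter φ c (hIter φ (n * k) y) :=
    fun k => by rw [← hIter_add, ← hIter_add, add_comm]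
  simpa only [hcomm, Function.comp_def] using ((continuous_hIter φ c).tendsto L).comp hy

end Asymptotic

lemma tendsto_dist_iterate_of_contracting {Z : Type*} [PseudoMetricSpace Z] {f : Z → Z}
    {R : Z → Z → Prop} {r : ℝ} (hr₀ : 0 ≤ r) (hr₁ : r < 1)
    (hf : ∀ a b, R a b → R (f a) (f b) ∧ dist (f a) (f b) ≤ r * dist a b) {a b : Z}
    (hab : R a b) : Tendsto (fun k : ℕ => dist (f^[k] a) (f^[k] b)) atTop (𝓝 0) := by
  have hbound : ∀ k : ℕ,
      R (f^[k] a) (f^[k] b) ∧ dist (f^[k] a) (f^[k] b) ≤ r ^ k * dist a b := by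
    intro k
    induction k with
    | zero => simpa using hab
    | succ k ih =>
      obtain ⟨hR, hdist⟩ := hf _ _ ih.1
      refine ⟨by simpa only [Function.iterate_succ_apply'] using hR, ?_⟩
      rw [Function.iterate_succ_apply', Function.iterate_succ_apply', pow_succ', mul_assoc]
      exact hdist.trans (mul_le_mul_of_nonneg_left ih.2 hr₀)
  refine squeeze_zero (fun _ => dist_nonneg) (fun k => (hbound k).2) ?_
  simpa using (tendsto_pow_atTop_nhds_zero_of_lt_one hr₀ hr₁).mul_const (dist a b)

namespace SmaleSpace

variable {X : Type*} [MetricSpace X] [CompactSpace X] (S : SmaleSpace X)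

lemma phi_mem_Xs {a b : X} (h : b ∈ S.Xs a S.eps) :
    S.phi b ∈ S.Xs (S.phi a) S.eps ∧ dist (S.phi a) (S.phi b) ≤ S.lam * dist a b := by
  obtain ⟨hbr, hd⟩ := h
  have hcontract : dist (S.phi a) (S.phi b) ≤ S.lam * dist a b := by
    simpa only [dist_comm] using
      S.contract_s a b a hbr hd (S.br_self a) (by simpa using S.eps_pos)
  have hd' : dist (S.phi a) (S.phi b) < S.eps :=
    hcontract.trans_lt ((mul_le_of_le_one_left dist_nonneg S.lam_lt_one.le).trans_lt hd)
  refine ⟨⟨?_, hd'⟩, hcontract⟩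
  rw [← S.phi_br b a (by rwa [dist_comm]) (by rwa [dist_comm]), hbr]

lemma phi_symm_mem_Xu {a b : X} (h : b ∈ S.Xu a S.eps) :
    S.phi.symm b ∈ S.Xu (S.phi.symm a) S.eps ∧
      dist (S.phi.symm a) (S.phi.symm b) ≤ S.lam * dist a b := by
  obtain ⟨hbr, hd⟩ := h
  have hcontract : dist (S.phi.symm a) (S.phi.symm b) ≤ S.lam * dist a b := by
    simpa only [dist_comm] using
      S.contract_u a b a hbr hd (S.br_self a) (by simpa using S.eps_pos)
  have hd' : dist (S.phi.symm a) (S.phi.symm b) < S.eps :=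
    hcontract.trans_lt ((mul_le_of_le_one_left dist_nonneg S.lam_lt_one.le).trans_lt hd)
  refine ⟨⟨?_, hd'⟩, hcontract⟩
  have hphi := S.phi_br (S.phi.symm a) (S.phi.symm b) hd' (by simpa using hd)
  rw [S.phi.apply_symm_apply, S.phi.apply_symm_apply, hbr] at hphi
  exact S.phi.eq_symm_apply.mpr hphi

lemma ga_subset_asympA : S.Ga ⊆ asympA S.phi := by
  rintro ⟨y, w⟩ h
  obtain ⟨n, hs, hu⟩ := mem_iUnion.mp h
  constructor
  · have hshift : ∀ (k : ℕ) (z : X),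
        hIter S.phi ↑(k + n) z = (⇑S.phi)^[k] (hIter S.phi n z) :=
      fun k z => by rw [Nat.cast_add, hIter_add, hIter_natCast]
    show Tendsto (fun m : ℕ => _) atTop _
    rw [← tendsto_add_atTop_iff_nat n]
    simpa only [hshift] using
      tendsto_dist_iterate_of_contracting (R := fun a b => b ∈ S.Xs a S.eps)
        S.lam_pos.le S.lam_lt_one (fun _ _ => S.phi_mem_Xs) hs
  · have hshift : ∀ (k : ℕ) (z : X),
        hIter S.phi (-↑(k + n)) z = (⇑S.phi.symm)^[k] (hIter S.phi (-n) z) :=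
      fun k z => by rw [Nat.cast_add, neg_add, hIter_add, hIter_neg_natCast]
    show Tendsto (fun m : ℕ => _) atTop _
    rw [← tendsto_add_atTop_iff_nat n]
    simpa only [hshift] using
      tendsto_dist_iterate_of_contracting (R := fun a b => b ∈ S.Xu a S.eps)
        S.lam_pos.le S.lam_lt_one (fun _ _ => S.phi_symm_mem_Xu) hu

lemma mem_ga_self (x : X) : (x, x) ∈ S.Ga := by
  refine S.gaN_subset_ga 0 ⟨?_, ?_⟩ <;>
    simpa [GsN, GuN, Gs0, Gu0, Xs, Xu, hIter, S.br_self] using S.eps_pos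

end SmaleSpace

namespace SmaleSpace.ACOEData

variable {X Y : Type*} [MetricSpace X] [CompactSpace X] [MetricSpace Y] [CompactSpace Y]
  {S : SmaleSpace X} {T : SmaleSpace Y} (A : ACOEData S T)

lemma d₁_self (x : X) : A.d₁ x x = 0 := by
  have := A.d₁_cocycle x x x (S.mem_ga_self x) (S.mem_ga_self x)
  omega

lemma hIter_c₁_mem_ga (x : X) : (hIter T.phi (A.c₁ x) (A.h x), A.h (S.phi x)) ∈ T.Ga := by
  simpa only [cSum_one, hIter_one] using A.xi₁_mem 1 x

end SmaleSpace.ACOEData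

theorem acoe_eta_limits_general {X Y : Type*} [MetricSpace X] [CompactSpace X]
    [MetricSpace Y] [CompactSpace Y] (S : SmaleSpace X) (T : SmaleSpace Y)
    (A : SmaleSpace.ACOEData S T) (x : X) (p : ℤ)
    (chp : ℤ) (hchp : chp = cSum S.phi A.c₁ p x + A.d₁ (hIter S.phi p x) x)
    (hchp0 : chp ≠ 0)
    (ys yu ys' yu' : Y)
    (hys : Tendsto (fun k : ℕ => hIter T.phi (|chp| * k) (A.h x)) atTop (nhds ys))
    (hyu : Tendsto (fun k : ℕ => hIter T.phi (-(|chp| * k)) (A.h x)) atTop (nhds yu))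
    (hys' : Tendsto (fun k : ℕ => hIter T.phi (|chp| * k) (A.h (S.phi x)))
      atTop (nhds ys'))
    (hyu' : Tendsto (fun k : ℕ => hIter T.phi (-(|chp| * k)) (A.h (S.phi x)))
      atTop (nhds yu')) :
    (ys' = hIter T.phi (A.c₁ x) ys ∧ yu' = hIter T.phi (A.c₁ x) yu) ∧
    (hIter S.phi p x = x →
      (hIter T.phi (cSum S.phi A.c₁ p x) ys = ys ∧
       hIter T.phi (cSum S.phi A.c₁ p x) yu = yu)) ∧
    ((hIter S.phi p x = x ∧ T.IsPeriodicPoint (A.h x) ∧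
        T.IsPeriodicPoint (A.h (S.phi x))) →
      (ys = A.h x ∧ yu = A.h x ∧ ys' = A.h (S.phi x) ∧ yu' = A.h (S.phi x) ∧
       A.h (S.phi x) = hIter T.phi (A.c₁ x) (A.h x))) := by
  have hn : |chp| ≠ 0 := abs_ne_zero.mpr hchp0
  simp only [← neg_mul] at hyu hyu'
  have hasymp := T.ga_subset_asympA (A.hIter_c₁_mem_ga x)
  have hs' := eq_hIter_of_tendsto_of_mem_asympA hn hasymp hys hys'
  have hu' := eq_hIter_of_tendsto_of_mem_asympA (neg_ne_zero.mpr hn) hasymp hyu hyu'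
  refine ⟨⟨hs', hu'⟩, fun hper => ?_, ?_⟩
  · have hchp_per : chp = cSum S.phi A.c₁ p x := by rw [hchp, hper, A.d₁_self, add_zero]
    rw [← hchp_per]
    exact ⟨hIter_eq_self_of_dvd _ (hIter_eq_self_of_tendsto hys) (abs_dvd_self chp),
      hIter_eq_self_of_dvd _ (hIter_eq_self_of_tendsto hyu) (neg_dvd.mpr (abs_dvd_self chp))⟩
  · rintro ⟨-, ⟨q, hq, hqx⟩, ⟨q', hq', hq'x⟩⟩
    have hys_eq := eq_of_tendsto_hIter_of_periodic hq hqx hys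
    have hys'_eq := eq_of_tendsto_hIter_of_periodic hq' hq'x hys'
    exact ⟨hys_eq, eq_of_tendsto_hIter_of_periodic hq hqx hyu, hys'_eq,
      eq_of_tendsto_hIter_of_periodic hq' hq'x hyu', by rw [← hys'_eq, hs', hys_eq]⟩

/-- behaviour of the limit points `η^s`, `η^u` of images of asymptotic
periodic points under an asymptotic continuous orbit equivalence. -/
theorem acoe_eta_limits {X Y : Type*} [MetricSpace X] [CompactSpace X]
    [MetricSpace Y] [CompactSpace Y] (S : SmaleSpace X) (T : SmaleSpace Y)
    (A : SmaleSpace.ACOEData S T) (x : X) (p : ℤ) (hp : p ≠ 0)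
    (hx : (hIter S.phi p x, x) ∈ S.Ga)
    (chp : ℤ) (hchp : chp = cSum S.phi A.c₁ p x + A.d₁ (hIter S.phi p x) x)
    (hchp0 : chp ≠ 0)
    (ys yu ys' yu' : Y)
    (hys : Tendsto (fun k : ℕ => hIter T.phi (|chp| * k) (A.h x)) atTop (nhds ys))
    (hyu : Tendsto (fun k : ℕ => hIter T.phi (-(|chp| * k)) (A.h x)) atTop (nhds yu))
    (hys' : Tendsto (fun k : ℕ => hIter T.phi (|chp| * k) (A.h (S.phi x)))
      atTop (nhds ys'))
    (hyu' : Tendsto (fun k : ℕ => hIter T.phi (-(|chp| * k)) (A.h (S.phi x)))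
      atTop (nhds yu')) :
    (ys' = hIter T.phi (A.c₁ x) ys ∧ yu' = hIter T.phi (A.c₁ x) yu) ∧
    (hIter S.phi p x = x →
      (hIter T.phi (cSum S.phi A.c₁ p x) ys = ys ∧
       hIter T.phi (cSum S.phi A.c₁ p x) yu = yu)) ∧
    ((hIter S.phi p x = x ∧ T.IsPeriodicPoint (A.h x) ∧
        T.IsPeriodicPoint (A.h (S.phi x))) →
      (ys = A.h x ∧ yu = A.h x ∧ ys' = A.h (S.phi x) ∧ yu' = A.h (S.phi x) ∧
       A.h (S.phi x) = hIter T.phi (A.c₁ x) (A.h x))) :=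
  acoe_eta_limits_general S T A x p chp hchp hchp0 ys yu ys' yu' hys hyu hys' hyu'
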